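/- Let X, Y ⊆ S^n be closed sets with X ∪ Y = S^n, and let B^X, B^Y ⊆ S^n be closed metric balls with antipodal centers satisfying Vol(B^X) = Vol(X) and Vol(B^Y) = Vol(Y). Assume the isoperimetric inequality on S^n: for any closed set A and closed ball B of the same volume, Vol(A_ε) ≥ Vol(B_ε) for all ε > 0. Then for every ε > 0, Vol((X ∩ Y)_ε) ≥ Vol((B^X ∩ B^Y)_ε). -/

import Mathlib

/-!
Since `X ∪ Y` is the whole sphere, `(X ∩ Y)_ε ⊇ X_ε ∩ Y_ε`: for `z ∈ X` and `y ∈ Y` with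
`d(z, y) ≤ ε`, the spherical cap around `z` through `y` is connected (for `n ≥ 1`), so it meets
`X ∩ Y`. Since `Bˣ ∪ Bʸ` is also the whole sphere (the balls meet and have antipodal centres),
inclusion–exclusion for the finite measure `Vol` and the isoperimetric inequality give
`Vol((Bˣ ∩ Bʸ)_ε) ≤ Vol(Bˣ_ε ∩ Bʸ_ε) = Vol(Bˣ_ε) + Vol(Bʸ_ε) - Vol(Sⁿ)
  ≤ Vol(X_ε) + Vol(Y_ε) - Vol(Sⁿ) ≤ Vol(X_ε ∩ Y_ε)`.
For `n = 0` the sphere is two points and one of the balls, hence one of `X`, `Y`, is everything.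
-/

open Metric MeasureTheory Set Module
open scoped ENNReal NNReal InnerProductSpace

section Caps

variable {F : Type*} [NormedAddCommGroup F] [InnerProductSpace ℝ F]

lemma smul_add_smul_ne_zero_of_ne_neg {x z : F} (hx : ‖x‖ = 1) (hz : ‖z‖ = 1) (hxz : x ≠ -z)
    {a b : ℝ} (ha : 0 ≤ a) (hb : 0 ≤ b) (hab : a + b = 1) : a • x + b • z ≠ 0 := by
  intro h
  have hnorm : ‖a • x‖ = ‖b • z‖ := by rw [eq_neg_of_add_eq_zero_left h, norm_neg]
  rw [norm_smul, norm_smul, hx, hz, Real.norm_of_nonneg ha, Real.norm_of_nonneg hb] at hnorm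
  refine hxz (eq_neg_of_add_eq_zero_left ?_)
  have : a = 1 / 2 := by linarith
  have : b = 1 / 2 := by linarith
  subst_vars
  simpa [← smul_add] using h

lemma real_inner_mul_norm_le_inner_smul_add_smul {x z : F} (hx : ‖x‖ = 1) (hz : ‖z‖ = 1)
    {a b : ℝ} (ha : 0 ≤ a) (hb : 0 ≤ b) (hab : a + b = 1) :
    ⟪x, z⟫_ℝ * ‖a • x + b • z‖ ≤ ⟪a • x + b • z, z⟫_ℝ := by
  set c := ⟪x, z⟫_ℝ
  have hc : |c| ≤ 1 := by simpa [hx, hz] using abs_real_inner_le_norm x z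
  have hinner : ⟪a • x + b • z, z⟫_ℝ = a * c + b := by
    simp [inner_add_left, real_inner_smul_left, hz, c]
  have hsq : ‖a • x + b • z‖ ^ 2 = a ^ 2 + 2 * a * b * c + b ^ 2 := by
    rw [norm_add_sq_real, norm_smul, norm_smul, real_inner_smul_left, real_inner_smul_right,
      Real.norm_of_nonneg ha, Real.norm_of_nonneg hb, hx, hz]
    ring
  have hle : ‖a • x + b • z‖ ≤ 1 := by
    calc ‖a • x + b • z‖ ≤ ‖a • x‖ + ‖b • z‖ := norm_add_le _ _
      _ = 1 := by rw [norm_smul, norm_smul, hx, hz, Real.norm_of_nonneg ha,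
                    Real.norm_of_nonneg hb, mul_one, mul_one, hab]
  rw [hinner]
  obtain ⟨hc₁, hc₂⟩ := abs_le.1 hc
  have hN := norm_nonneg (a • x + b • z)
  rcases le_total 0 c with hc0 | hc0
  · nlinarith
  rcases le_total 0 (a * c + b) with hv | hv
  · nlinarith
  -- both sides are negative: compare squares
  have hsq' : (a * c + b) ^ 2 ≤ (c * ‖a • x + b • z‖) ^ 2 := by
    rw [mul_pow, hsq]
    nlinarith [mul_nonneg hb (mul_nonneg (sub_nonneg.2 (sq_le_one_iff_abs_le_one c |>.2 hc))
      (by nlinarith : 0 ≤ -(2 * a * c + b)))]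
  nlinarith [mul_nonpos_of_nonpos_of_nonneg hc0 hN]

lemma dist_le_dist_of_real_inner_le {u x z : F} (hu : ‖u‖ = 1) (hx : ‖x‖ = 1)
    (h : ⟪x, z⟫_ℝ ≤ ⟪u, z⟫_ℝ) : dist u z ≤ dist x z := by
  rw [dist_eq_norm, dist_eq_norm, ← sq_le_sq₀ (norm_nonneg _) (norm_nonneg _),
    norm_sub_sq_real, norm_sub_sq_real, hu, hx]
  linarith

/-- Each point `x` of the cap is joined to its centre `z` by the radial projection of the chord
`[x, z]`, along which the distance to `z` only decreases; if `x = -z` the cap is the whole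
sphere. -/
lemma isPreconnected_sphere_inter_closedBall (hF : 1 < Module.rank ℝ F) {z : F} (hz : ‖z‖ = 1)
    (r : ℝ) : IsPreconnected (sphere (0 : F) 1 ∩ closedBall z r) := by
  refine isPreconnected_of_forall z fun x ⟨hxS, hxr⟩ ↦ ?_
  rw [mem_sphere_zero_iff_norm] at hxS
  rw [mem_closedBall] at hxr
  by_cases hxz : x = -z
  · refine ⟨sphere 0 1, fun w hw ↦ ⟨hw, ?_⟩, by simp [hz], by simp [hxS],
      (isConnected_sphere hF 0 zero_le_one).isPreconnected⟩
    have hw : ‖w‖ = 1 := mem_sphere_zero_iff_norm.1 hw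
    have hxz2 : dist x z = 2 := by
      rw [hxz, dist_eq_norm, ← neg_add', norm_neg, ← two_smul ℝ, norm_smul, hz]; norm_num
    rw [mem_closedBall, dist_eq_norm]
    linarith [norm_sub_le w z]
  refine ⟨(fun v ↦ ‖v‖⁻¹ • v) '' segment ℝ x z, ?_, ⟨z, right_mem_segment _ _ _, by simp [hz]⟩,
    ⟨x, left_mem_segment _ _ _, by simp [hxS]⟩, ?_⟩
  · rintro _ ⟨_, ⟨a, b, ha, hb, hab, rfl⟩, rfl⟩
    have hv := smul_add_smul_ne_zero_of_ne_neg hxS hz hxz ha hb hab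
    have hu : ‖‖a • x + b • z‖⁻¹ • (a • x + b • z)‖ = 1 := norm_smul_inv_norm hv
    refine ⟨mem_sphere_zero_iff_norm.2 hu, (dist_le_dist_of_real_inner_le hu hxS ?_).trans hxr⟩
    rw [real_inner_smul_left, le_inv_mul_iff₀ (norm_pos_iff.2 hv), mul_comm]
    exact real_inner_mul_norm_le_inner_smul_add_smul hxS hz ha hb hab
  · refine (convex_segment x z).isPreconnected.image _ (ContinuousOn.smul ?_ continuousOn_id)
    refine (continuous_norm.continuousOn).inv₀ fun v hv ↦ norm_ne_zero_iff.2 ?_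
    obtain ⟨a, b, ha, hb, hab, rfl⟩ := hv
    exact smul_add_smul_ne_zero_of_ne_neg hxS hz hxz ha hb hab

lemma isPreconnected_closedBall_sphere (hF : 1 < Module.rank ℝ F) (z : sphere (0 : F) 1) (r : ℝ) :
    IsPreconnected (closedBall z r) := by
  rw [← Topology.IsInducing.subtypeVal.isPreconnected_image, ← Subtype.preimage_closedBall,
    Subtype.image_preimage_coe]
  exact isPreconnected_sphere_inter_closedBall hF (mem_sphere_zero_iff_norm.1 z.2) r

end Caps

section Thickening

variable {M : Type*} [PseudoMetricSpace M] [CompactSpace M]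

lemma mem_cthickening_inter_of_mem_of_mem_cthickening
    (hball : ∀ (z : M) (r : ℝ), IsPreconnected (closedBall z r))
    {X Y : Set M} (hX : IsClosed X) (hY : IsClosed Y) (hXY : X ∪ Y = univ) {ε : ℝ} {z : M}
    (hzX : z ∈ X) (hzY : z ∈ cthickening ε Y) : z ∈ cthickening ε (X ∩ Y) := by
  rcases Y.eq_empty_or_nonempty with rfl | hYne
  · simp at hzY
  obtain ⟨y, hy, hzy⟩ := hY.isCompact.exists_infEDist_eq_edist hYne z
  obtain ⟨w, hwz, hw⟩ := isPreconnected_closed_iff.1 (hball z (dist y z)) X Y hX hY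
    (by simp [hXY]) ⟨z, mem_closedBall_self dist_nonneg, hzX⟩ ⟨y, mem_closedBall.2 le_rfl, hy⟩
  refine mem_cthickening_iff.2 ((infEDist_le_edist_of_mem hw).trans ?_)
  rw [mem_cthickening_iff] at hzY
  refine le_trans ?_ (hzy ▸ hzY)
  rw [edist_dist, edist_dist]
  exact ENNReal.ofReal_le_ofReal (by rw [dist_comm z y, dist_comm]; exact hwz)

lemma cthickening_inter_cthickening_subset
    (hball : ∀ (z : M) (r : ℝ), IsPreconnected (closedBall z r))
    {X Y : Set M} (hX : IsClosed X) (hY : IsClosed Y) (hXY : X ∪ Y = univ) (ε : ℝ) :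
    cthickening ε X ∩ cthickening ε Y ⊆ cthickening ε (X ∩ Y) := by
  rintro z ⟨hzX, hzY⟩
  rcases (hXY ▸ mem_univ z : z ∈ X ∪ Y) with hz | hz
  · exact mem_cthickening_inter_of_mem_of_mem_cthickening hball hX hY hXY hz hzY
  · rw [inter_comm]
    exact mem_cthickening_inter_of_mem_of_mem_cthickening hball hY hX (union_comm X Y ▸ hXY) hz hzX

end Thickening

section Measure

variable {α : Type*} [MeasurableSpace α] {μ : Measure α} [IsFiniteMeasure μ]

lemma measure_inter_le_measure_inter_of_union_eq_univ {A B A' B' : Set α} (hAB : A ∪ B = univ)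
    (hB : MeasurableSet B) (hB' : MeasurableSet B') (hA : μ A ≤ μ A') (hBB : μ B ≤ μ B') :
    μ (A ∩ B) ≤ μ (A' ∩ B') := by
  refine (ENNReal.add_le_add_iff_left (measure_ne_top μ univ)).1 ?_
  calc μ univ + μ (A ∩ B) = μ A + μ B := by rw [← hAB, measure_union_add_inter _ hB]
    _ ≤ μ A' + μ B' := add_le_add hA hBB
    _ = μ (A' ∪ B') + μ (A' ∩ B') := (measure_union_add_inter _ hB').symm
    _ ≤ μ univ + μ (A' ∩ B') := add_le_add (measure_mono (subset_univ _)) le_rfl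

lemma eq_univ_of_measure_eq_measure_univ (hμ : ∀ x, μ {x} ≠ 0) {A : Set α}
    (hA : MeasurableSet A) (h : μ A = μ univ) : A = univ := by
  have hcompl : μ Aᶜ = 0 := by rw [measure_compl hA (measure_ne_top μ A), h, tsub_self]
  refine eq_univ_of_forall fun x ↦ not_not.1 fun hx ↦ hμ x ?_
  exact measure_mono_null (singleton_subset_iff.2 hx) hcompl

end Measure

lemma lipschitzOnWith_inv_norm_smul {F : Type*} [NormedAddCommGroup F] [NormedSpace ℝ F] :
    LipschitzOnWith 2 (fun x : F ↦ ‖x‖⁻¹ • x) {x | 1 ≤ ‖x‖} := by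
  refine LipschitzOnWith.of_dist_le_mul fun x hx y hy ↦ ?_
  have hx0 : 0 < ‖x‖ := one_pos.trans_le hx
  have hy0 : 0 < ‖y‖ := one_pos.trans_le hy
  have hsplit : ‖x‖⁻¹ • x - ‖y‖⁻¹ • y = ‖x‖⁻¹ • ((x - y) + ((‖y‖ - ‖x‖) * ‖y‖⁻¹) • y) := by
    have hcoef : ‖x‖⁻¹ * ((‖y‖ - ‖x‖) * ‖y‖⁻¹) = ‖x‖⁻¹ - ‖y‖⁻¹ := by
      field_simp
    rw [smul_add, smul_smul, hcoef, sub_smul, smul_sub]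
    abel
  rw [dist_eq_norm, dist_eq_norm, hsplit, norm_smul, norm_inv, norm_norm, NNReal.coe_two]
  calc ‖x‖⁻¹ * ‖x - y + ((‖y‖ - ‖x‖) * ‖y‖⁻¹) • y‖
      ≤ 1 * (‖x - y‖ + ‖x - y‖) := by
        gcongr
        · exact inv_le_one_of_one_le₀ hx
        · refine (norm_add_le _ _).trans (add_le_add le_rfl ?_)
          rw [norm_smul, norm_mul, norm_inv, norm_norm, mul_assoc, inv_mul_cancel₀ hy0.ne', mul_one,
            Real.norm_eq_abs, abs_sub_comm]
          exact abs_norm_sub_norm_le x y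
    _ = 2 * ‖x - y‖ := by ring

noncomputable def cubeFace {n : ℕ} (i : Fin (n + 1)) (s : ℝ) (y : Fin n → ℝ) :
    EuclideanSpace ℝ (Fin (n + 1)) :=
  WithLp.toLp 2 (i.insertNth s y)

lemma lipschitzWith_cubeFace {n : ℕ} (i : Fin (n + 1)) (s : ℝ) :
    LipschitzWith ((n + 1 : ℝ≥0) ^ (2⁻¹ : ℝ)) (cubeFace i s) := by
  have hinsert : LipschitzWith 1 (i.insertNth (α := fun _ ↦ ℝ) s) :=
    LipschitzWith.of_dist_le_mul fun y z ↦ by simp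
  show LipschitzWith _ (WithLp.toLp 2 ∘ i.insertNth (α := fun _ ↦ ℝ) s)
  have h := (PiLp.lipschitzWith_toLp 2 fun _ : Fin (n + 1) ↦ ℝ).comp hinsert
  simp only [Fintype.card_fin, Nat.cast_add, Nat.cast_one, mul_one] at h
  convert h using 2
  norm_num

lemma one_le_norm_cubeFace {n : ℕ} (i : Fin (n + 1)) {s : ℝ} (hs : |s| = 1) (y : Fin n → ℝ) :
    1 ≤ ‖cubeFace i s y‖ := by
  simpa [cubeFace, hs] using PiLp.norm_apply_le (cubeFace i s y) i

lemma sphere_subset_iUnion_cubeFace (n : ℕ) :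
    sphere (0 : EuclideanSpace ℝ (Fin (n + 1))) 1 ⊆ ⋃ i, ⋃ s ∈ ({1, -1} : Set ℝ),
      (fun x ↦ ‖x‖⁻¹ • x) ∘ cubeFace i s '' closedBall 0 1 := by
  intro u hu
  rw [mem_sphere_zero_iff_norm] at hu
  obtain ⟨i, -, hi⟩ := Finset.exists_max_image Finset.univ (fun j ↦ |u j|) Finset.univ_nonempty
  have hm : 0 < |u i| := by
    by_contra! h
    have : u = 0 := by
      ext j; simpa using (hi j (Finset.mem_univ j)).trans h
    simp [this] at hu
  have hface : ∀ s, s * |u i| = u i → u ∈ (fun x ↦ ‖x‖⁻¹ • x) ∘ cubeFace i s '' closedBall 0 1 := by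
    intro s hs
    refine ⟨fun j ↦ u (i.succAbove j) / |u i|, ?_, ?_⟩
    · rw [mem_closedBall_zero_iff, pi_norm_le_iff_of_nonneg zero_le_one]
      intro j
      rw [norm_div, Real.norm_eq_abs, Real.norm_eq_abs, abs_abs, div_le_one hm]
      exact hi _ (Finset.mem_univ _)
    · have : cubeFace i s (fun j ↦ u (i.succAbove j) / |u i|) = |u i|⁻¹ • u := by
        ext j
        obtain rfl | ⟨k, rfl⟩ := i.eq_self_or_eq_succAbove j
        · rw [cubeFace, WithLp.ofLp_toLp, Fin.insertNth_apply_same, PiLp.smul_apply, smul_eq_mul,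
            eq_inv_mul_iff_mul_eq₀ hm.ne', mul_comm, hs]
        · rw [cubeFace, WithLp.ofLp_toLp, Fin.insertNth_apply_succAbove, PiLp.smul_apply,
            smul_eq_mul, div_eq_inv_mul]
      simp only [Function.comp_apply, this, norm_smul, hu, norm_inv, Real.norm_eq_abs, abs_abs,
        mul_one, inv_inv, smul_smul, mul_inv_cancel₀ hm.ne', one_smul]
  simp only [mem_iUnion, mem_insert_iff, mem_singleton_iff]
  refine ⟨i, ?_⟩
  rcases le_total 0 (u i) with h | h
  · exact ⟨1, Or.inl rfl, hface 1 (by rw [one_mul, abs_of_nonneg h])⟩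
  · exact ⟨-1, Or.inr rfl, hface (-1) (by rw [abs_of_nonpos h]; ring)⟩

/-- The sphere is the radial projection of the boundary of the cube `[-1, 1]ⁿ⁺¹`, whose faces
are Lipschitz images of the cube `[-1, 1]ⁿ`, on which `μH[n]` is Lebesgue measure. -/
lemma hausdorffMeasure_sphere_lt_top (n : ℕ) :
    μH[n] (sphere (0 : EuclideanSpace ℝ (Fin (n + 1))) 1) < ∞ := by
  have hcube : μH[n] (closedBall (0 : Fin n → ℝ) 1) < ∞ := by
    have : (μH[n] : Measure (Fin n → ℝ)) = volume := by
      simpa using hausdorffMeasure_pi_real (ι := Fin n)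
    exact this ▸ measure_closedBall_lt_top
  refine (measure_mono (sphere_subset_iUnion_cubeFace n)).trans_lt ?_
  refine (measure_iUnion_fintype_le _ _).trans_lt (ENNReal.sum_lt_top.2 fun i _ ↦ ?_)
  refine measure_biUnion_lt_top (toFinite _) fun s hs ↦ ?_
  have hs : |s| = 1 := by rcases hs with rfl | rfl <;> simp
  have hlip := lipschitzOnWith_inv_norm_smul.comp
    ((lipschitzWith_cubeFace i s).lipschitzOnWith (s := closedBall 0 1))
    fun y _ ↦ one_le_norm_cubeFace i hs y
  refine (hlip.hausdorffMeasure_image_le n.cast_nonneg).trans_lt (ENNReal.mul_lt_top ?_ hcube)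
  finiteness

instance (n : ℕ) :
    IsFiniteMeasure (μH[n] : Measure (sphere (0 : EuclideanSpace ℝ (Fin (n + 1))) 1)) := by
  refine ⟨?_⟩
  rw [← isometry_subtype_coe.hausdorffMeasure_image (Or.inl n.cast_nonneg), image_univ,
    Subtype.range_coe]
  exact hausdorffMeasure_sphere_lt_top n

section AntipodalBalls

variable {F : Type*} [NormedAddCommGroup F] [InnerProductSpace ℝ F] {p q : sphere (0 : F) 1}

lemma dist_sq_add_dist_sq_of_eq_neg (hpq : (q : F) = -p) (z : sphere (0 : F) 1) :
    dist z p ^ 2 + dist z q ^ 2 = 4 := by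
  rw [Subtype.dist_eq, Subtype.dist_eq, dist_eq_norm, dist_eq_norm, hpq, sub_neg_eq_add,
    norm_sub_sq_real, norm_add_sq_real, norm_eq_of_mem_sphere, norm_eq_of_mem_sphere]
  ring

lemma closedBall_union_closedBall_eq_univ_of_eq_neg (hpq : (q : F) = -p) {rX rY : ℝ}
    (hne : (closedBall p rX ∩ closedBall q rY).Nonempty) :
    closedBall p rX ∪ closedBall q rY = univ := by
  obtain ⟨z₀, hz₀p, hz₀q⟩ := hne
  refine eq_univ_of_forall fun z ↦ ?_
  rw [mem_union, mem_closedBall, mem_closedBall] at *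
  have := dist_sq_add_dist_sq_of_eq_neg hpq z
  have := dist_sq_add_dist_sq_of_eq_neg hpq z₀
  by_contra! h
  nlinarith [dist_nonneg (x := z₀) (y := p), dist_nonneg (x := z₀) (y := q)]

lemma eq_or_eq_neg_of_finrank_eq_one (hF : finrank ℝ F = 1) {x y : F} (hx : ‖x‖ = 1)
    (hy : ‖y‖ = 1) : x = y ∨ x = -y := by
  obtain ⟨c, rfl⟩ :=
    (finrank_eq_one_iff_of_nonzero' y (norm_ne_zero_iff.1 (by simp [hy]))).1 hF x
  rw [norm_smul, hy, mul_one, Real.norm_eq_abs] at hx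
  rcases (abs_eq zero_le_one).1 hx with rfl | rfl <;> simp

lemma closedBall_eq_univ_or_closedBall_eq_univ_of_finrank_eq_one (hF : finrank ℝ F = 1)
    (hpq : (q : F) = -p) {rX rY : ℝ} (hne : (closedBall p rX ∩ closedBall q rY).Nonempty) :
    closedBall p rX = univ ∨ closedBall q rY = univ := by
  obtain ⟨z, hzp, hzq⟩ := hne
  have hdist : ∀ w : sphere (0 : F) 1, dist w p ≤ 2 ∧ dist w q ≤ 2 := fun w ↦ by
    have := dist_sq_add_dist_sq_of_eq_neg hpq w
    constructor <;> nlinarith [dist_nonneg (x := w) (y := p), dist_nonneg (x := w) (y := q)]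
  have hdpq := dist_sq_add_dist_sq_of_eq_neg hpq p
  rw [dist_self] at hdpq
  rcases eq_or_eq_neg_of_finrank_eq_one hF (norm_eq_of_mem_sphere z) (norm_eq_of_mem_sphere p)
    with hz | hz
  · obtain rfl : z = p := Subtype.ext hz
    refine Or.inr (eq_univ_of_forall fun w ↦ (hdist w).2.trans ?_)
    nlinarith [mem_closedBall.1 hzq, dist_nonneg (x := z) (y := q)]
  · obtain rfl : z = q := Subtype.ext (hz.trans hpq.symm)
    refine Or.inl (eq_univ_of_forall fun w ↦ (hdist w).1.trans ?_)
    nlinarith [mem_closedBall.1 hzp, dist_nonneg (x := z) (y := p), dist_comm z p]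

lemma eq_univ_or_eq_univ_of_finrank_eq_one [MeasurableSpace F] (hF : finrank ℝ F = 1)
    {μ : Measure (sphere (0 : F) 1)} [IsFiniteMeasure μ] (hμ : ∀ x, μ {x} ≠ 0)
    {X Y : Set (sphere (0 : F) 1)} (hX : MeasurableSet X) (hY : MeasurableSet Y)
    (hpq : (q : F) = -p) {rX rY : ℝ} (hne : (closedBall p rX ∩ closedBall q rY).Nonempty)
    (hBX : μ (closedBall p rX) = μ X) (hBY : μ (closedBall q rY) = μ Y) : X = univ ∨ Y = univ := by
  rcases closedBall_eq_univ_or_closedBall_eq_univ_of_finrank_eq_one hF hpq hne with h | h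
  · exact Or.inl (eq_univ_of_measure_eq_measure_univ hμ hX (h ▸ hBX).symm)
  · exact Or.inr (eq_univ_of_measure_eq_measure_univ hμ hY (h ▸ hBY).symm)

end AntipodalBalls

/-- Given closed sets `X, Y` covering `Sⁿ`, closed balls `Bˣ, Bʸ` with antipodal centers
and matching volumes, and assuming the isoperimetric inequality on the sphere,
we get `Vol((X ∩ Y)_ε) ≥ Vol((Bˣ ∩ Bʸ)_ε)` for all `ε > 0`. -/
theorem stmt2 (n : ℕ)
    (X Y : Set ↥(sphere (0 : EuclideanSpace ℝ (Fin (n + 1))) 1))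
    (hX : IsClosed X) (hY : IsClosed Y) (hXY : X ∪ Y = Set.univ)
    (p q : ↥(sphere (0 : EuclideanSpace ℝ (Fin (n + 1))) 1))
    (hpq : (q : EuclideanSpace ℝ (Fin (n + 1))) = -(p : EuclideanSpace ℝ (Fin (n + 1))))
    (rX rY : ℝ)
    (hBX : μH[(n : ℝ)] (closedBall p rX) = μH[(n : ℝ)] X)
    (hBY : μH[(n : ℝ)] (closedBall q rY) = μH[(n : ℝ)] Y)
    (iso : ∀ A : Set ↥(sphere (0 : EuclideanSpace ℝ (Fin (n + 1))) 1), IsClosed A →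
      ∀ (c : ↥(sphere (0 : EuclideanSpace ℝ (Fin (n + 1))) 1)) (ρ : ℝ),
        μH[(n : ℝ)] (closedBall c ρ) = μH[(n : ℝ)] A →
        ∀ ε : ℝ, 0 < ε →
          μH[(n : ℝ)] (cthickening ε A) ≥ μH[(n : ℝ)] (cthickening ε (closedBall c ρ))) :
    ∀ ε : ℝ, 0 < ε →
      μH[(n : ℝ)] (cthickening ε (X ∩ Y)) ≥
        μH[(n : ℝ)] (cthickening ε (closedBall p rX ∩ closedBall q rY)) := by
  intro ε hε
  rcases (closedBall p rX ∩ closedBall q rY).eq_empty_or_nonempty with hempty | hne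
  · simp [hempty]
  have hincl : cthickening ε X ∩ cthickening ε Y ⊆ cthickening ε (X ∩ Y) := by
    rcases n.eq_zero_or_pos with rfl | hn
    · obtain rfl | rfl := eq_univ_or_eq_univ_of_finrank_eq_one (by simp) (fun x ↦ by simp)
        hX.measurableSet hY.measurableSet hpq hne hBX hBY
      · simp
      · simp
    · have hrank : 1 < Module.rank ℝ (EuclideanSpace ℝ (Fin (n + 1))) := by
        rw [← finrank_eq_rank, finrank_euclideanSpace_fin]
        exact_mod_cast Nat.lt_add_of_pos_left hn
      exact cthickening_inter_cthickening_subset (isPreconnected_closedBall_sphere hrank)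
        hX hY hXY ε
  have hcover : cthickening ε (closedBall p rX) ∪ cthickening ε (closedBall q rY) = univ := by
    rw [← cthickening_union, closedBall_union_closedBall_eq_univ_of_eq_neg hpq hne]
    exact univ_subset_iff.1 (self_subset_cthickening _)
  calc μH[(n : ℝ)] (cthickening ε (closedBall p rX ∩ closedBall q rY))
      ≤ μH[(n : ℝ)] (cthickening ε (closedBall p rX) ∩ cthickening ε (closedBall q rY)) :=
        measure_mono (subset_inter (cthickening_subset_of_subset ε inter_subset_left)
          (cthickening_subset_of_subset ε inter_subset_right))
    _ ≤ μH[(n : ℝ)] (cthickening ε X ∩ cthickening ε Y) :=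
        measure_inter_le_measure_inter_of_union_eq_univ hcover isClosed_cthickening.measurableSet
          isClosed_cthickening.measurableSet (iso X hX p rX hBX ε hε) (iso Y hY q rY hBY ε hε)
    _ ≤ μH[(n : ℝ)] (cthickening ε (X ∩ Y)) := measure_mono hincl
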